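/- Let M ≥ 2 be an integer, 0 < d ≤ λ/2, x ∈ (−1, 1), and define f(v, x) = −(1/√M) ∑_{m=1}^{M} sin((2πd/λ)(m−1)(v−x)). Then the set of stable points { v ∈ (−1, 1] : f(v, x) = 0 and ∂f/∂v (v, x) < 0 } equals { v ∈ (−1, 1] : v = x + kλ/((M−1)d) for some integer k }. -/

import Mathlib

/-!
Put `θ = 2πd/λ · (v - x)` and `S(θ) = ∑_{m<M} sin (mθ)`. The drift is `-S(θ)/√M`, and its
derivative in `v` is a negative multiple of `S'(θ)`, so the stable points are the zeros of `S`
with `S' > 0`. The Dirichlet-kernel identity `sin (θ/2) S(θ) = sin (Mθ/2) sin ((M-1)θ/2)` locates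
the zeros of `S`; differentiating it shows that at a zero with `sin (θ/2) ≠ 0` we have
`S'(θ) = (M-1)/2` if `sin ((M-1)θ/2) = 0` and `S'(θ) = -M/2` if `sin (Mθ/2) = 0`, while
`S'(θ) = M(M-1)/2` on `2πℤ`. Hence the stable points are exactly those with `(M-1)θ ∈ 2πℤ`.
-/

open Real Finset

/-- The noiseless drift of the recursive beam tracker. -/
noncomputable def driftF (M : ℕ) (d lam v x : ℝ) : ℝ :=
  -(1 / Real.sqrt M) * ∑ m ∈ Finset.range M, Real.sin ((2 * π * d / lam) * m * (v - x))

noncomputable def sinSum (M : ℕ) (θ : ℝ) : ℝ := ∑ m ∈ range M, sin (m * θ)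

theorem sin_half_mul_sinSum (M : ℕ) (θ : ℝ) :
    sin (θ / 2) * sinSum M θ = sin (M * θ / 2) * sin ((M - 1) * θ / 2) := by
  induction M with
  | zero => simp [sinSum]
  | succ n ih =>
    have key (a b : ℝ) : sin a * sin (a - b) + sin b * sin (2 * a) = sin (a + b) * sin a := by
      rw [sin_sub, sin_add, sin_two_mul]; ring
    rw [sinSum, sum_range_succ, mul_add, ← sinSum, ih]
    convert key (n * θ / 2) (θ / 2) using 3 <;> push_cast <;> ring_nf

theorem hasDerivAt_sinSum (M : ℕ) (θ : ℝ) :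
    HasDerivAt (sinSum M) (∑ m ∈ range M, m * cos (m * θ)) θ := by
  have h := HasDerivAt.fun_sum (u := range M) fun m _ =>
    ((hasDerivAt_id θ).const_mul (m : ℝ)).sin
  simp only [id, mul_one, mul_comm (cos _)] at h
  exact h

theorem sin_half_mul_sum_mul_cos (M : ℕ) (θ : ℝ) :
    sin (θ / 2) * ∑ m ∈ range M, m * cos (m * θ) + cos (θ / 2) / 2 * sinSum M θ =
      M / 2 * cos (M * θ / 2) * sin ((M - 1) * θ / 2) +
        (M - 1) / 2 * sin (M * θ / 2) * cos ((M - 1) * θ / 2) := by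
  have hlin : ∀ a : ℝ, HasDerivAt (fun t : ℝ => a * t / 2) (a / 2) θ := fun a => by
    simpa using ((hasDerivAt_id θ).const_mul a).div_const 2
  have hl := (hlin 1).sin.fun_mul (hasDerivAt_sinSum M θ)
  have hr := (hlin M).sin.fun_mul (hlin (M - 1)).sin
  have heq : (fun t => sin (1 * t / 2) * sinSum M t) =
      fun t => sin (M * t / 2) * sin ((M - 1) * t / 2) := by
    ext t; rw [one_mul]; exact sin_half_mul_sinSum M t
  rw [heq] at hl
  have := hl.unique hr
  simp only [one_mul] at this
  linear_combination this

theorem sinSum_eq_zero_iff_of_sin_half_ne_zero (M : ℕ) {θ : ℝ} (hθ : sin (θ / 2) ≠ 0) :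
    sinSum M θ = 0 ↔ sin (M * θ / 2) = 0 ∨ sin ((M - 1) * θ / 2) = 0 := by
  rw [← mul_eq_zero, ← sin_half_mul_sinSum, mul_eq_zero, or_iff_right hθ]

theorem sum_mul_cos_of_sin_sub_one_mul_eq_zero (M : ℕ) {θ : ℝ} (hθ : sin (θ / 2) ≠ 0)
    (h : sin ((M - 1) * θ / 2) = 0) :
    ∑ m ∈ range M, m * cos (m * θ) = (M - 1) / 2 := by
  have hS : sinSum M θ = 0 := (sinSum_eq_zero_iff_of_sin_half_ne_zero M hθ).2 (.inr h)
  have hcos : cos ((M - 1) * θ / 2) ^ 2 = 1 := by nlinarith [sin_sq_add_cos_sq ((M - 1) * θ / 2)]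
  have hsin : sin (M * θ / 2) = cos ((M - 1) * θ / 2) * sin (θ / 2) := by
    rw [show (M : ℝ) * θ / 2 = (M - 1) * θ / 2 + θ / 2 by ring, sin_add, h]; ring
  have hd := sin_half_mul_sum_mul_cos M θ
  rw [hS, h, hsin] at hd
  refine mul_left_cancel₀ hθ ?_
  linear_combination hd + (M - 1) / 2 * sin (θ / 2) * hcos

theorem sum_mul_cos_of_sin_mul_eq_zero (M : ℕ) {θ : ℝ} (hθ : sin (θ / 2) ≠ 0)
    (h : sin (M * θ / 2) = 0) :
    ∑ m ∈ range M, m * cos (m * θ) = -(M / 2) := by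
  have hS : sinSum M θ = 0 := (sinSum_eq_zero_iff_of_sin_half_ne_zero M hθ).2 (.inl h)
  have hcos : cos (M * θ / 2) ^ 2 = 1 := by nlinarith [sin_sq_add_cos_sq (M * θ / 2)]
  have hsin : sin ((M - 1) * θ / 2) = -(cos (M * θ / 2) * sin (θ / 2)) := by
    rw [show ((M : ℝ) - 1) * θ / 2 = M * θ / 2 - θ / 2 by ring, sin_sub, h]; ring
  have hd := sin_half_mul_sum_mul_cos M θ
  rw [hS, h, hsin] at hd
  refine mul_left_cancel₀ hθ ?_
  linear_combination hd - M / 2 * sin (θ / 2) * hcos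

theorem sinSum_int_mul_two_pi (M : ℕ) (n : ℤ) : sinSum M (n * (2 * π)) = 0 :=
  sum_eq_zero fun m _ => by
    rw [show (m : ℝ) * (n * (2 * π)) = ((2 * m * n : ℤ) : ℝ) * π by push_cast; ring]
    exact sin_int_mul_pi _

theorem sum_mul_cos_int_mul_two_pi (M : ℕ) (n : ℤ) :
    ∑ m ∈ range M, m * cos (m * (n * (2 * π))) = ∑ m ∈ range M, (m : ℝ) :=
  sum_congr rfl fun m _ => by
    rw [show (m : ℝ) * (n * (2 * π)) = ((m * n : ℤ) : ℝ) * (2 * π) by push_cast; ring,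
      cos_int_mul_two_pi, mul_one]

theorem sinSum_eq_zero_and_sum_mul_cos_pos_iff {M : ℕ} (hM : 2 ≤ M) (θ : ℝ) :
    sinSum M θ = 0 ∧ 0 < ∑ m ∈ range M, m * cos (m * θ) ↔ sin ((M - 1) * θ / 2) = 0 := by
  have hM' : (2 : ℝ) ≤ M := by exact_mod_cast hM
  by_cases hθ : sin (θ / 2) = 0
  · obtain ⟨n, hn⟩ := sin_eq_zero_iff.mp hθ
    obtain rfl : θ = n * (2 * π) := by linarith
    refine iff_of_true ⟨sinSum_int_mul_two_pi M n, ?_⟩ ?_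
    · rw [sum_mul_cos_int_mul_two_pi]
      exact sum_pos' (fun m _ => m.cast_nonneg) ⟨1, mem_range.2 hM, by norm_num⟩
    · rw [show ((M : ℝ) - 1) * (n * (2 * π)) / 2 = (((M - 1) * n : ℤ) : ℝ) * π by push_cast; ring]
      exact sin_int_mul_pi _
  constructor
  · rintro ⟨hS, hC⟩
    refine ((sinSum_eq_zero_iff_of_sin_half_ne_zero M hθ).1 hS).resolve_left fun h => ?_
    rw [sum_mul_cos_of_sin_mul_eq_zero M hθ h] at hC
    linarith
  · intro h
    refine ⟨(sinSum_eq_zero_iff_of_sin_half_ne_zero M hθ).2 (.inr h), ?_⟩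
    rw [sum_mul_cos_of_sin_sub_one_mul_eq_zero M hθ h]
    linarith

theorem driftF_eq_sinSum (M : ℕ) (d lam v x : ℝ) :
    driftF M d lam v x = -(1 / √M) * sinSum M (2 * π * d / lam * (v - x)) := by
  unfold driftF sinSum
  congr 1
  exact sum_congr rfl fun m _ => by ring_nf

theorem hasDerivAt_driftF (M : ℕ) (d lam x v : ℝ) :
    HasDerivAt (fun u => driftF M d lam u x)
      (-(1 / √M) * (2 * π * d / lam *
        ∑ m ∈ range M, m * cos (m * (2 * π * d / lam * (v - x))))) v := by
  simp only [driftF_eq_sinSum]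
  have hlin : HasDerivAt (fun u => 2 * π * d / lam * (u - x)) (2 * π * d / lam) v := by
    simpa using ((hasDerivAt_id v).sub_const x).const_mul (2 * π * d / lam)
  have := ((hasDerivAt_sinSum M _).comp v hlin).const_mul (-(1 / √M))
  rwa [mul_comm (∑ m ∈ range M, _)] at this

theorem stmt_3_general (M : ℕ) (hM : 2 ≤ M) (d lam : ℝ) (hd : 0 < d) (hdl : d ≤ lam / 2)
    (x : ℝ) :
    {v : ℝ | v ∈ Set.Ioc (-1 : ℝ) 1 ∧ driftF M d lam v x = 0 ∧
        deriv (fun u => driftF M d lam u x) v < 0}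
      = {v : ℝ | v ∈ Set.Ioc (-1 : ℝ) 1 ∧
          ∃ k : ℤ, v = x + (k : ℝ) * lam / (((M : ℝ) - 1) * d)} := by
  have hlam : 0 < lam := by linarith
  have hc : 0 < 2 * π * d / lam := by positivity
  have hM1 : (0 : ℝ) < M - 1 := by
    have : (2 : ℝ) ≤ M := by exact_mod_cast hM
    linarith
  have hsqrt : 0 < 1 / √M := by positivity
  ext v
  refine and_congr_right fun _ => ?_
  rw [driftF_eq_sinSum, (hasDerivAt_driftF M d lam x v).deriv, neg_mul, neg_eq_zero,
    mul_eq_zero, or_iff_right hsqrt.ne', neg_mul, neg_lt_zero, mul_pos_iff_of_pos_left hsqrt,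
    mul_pos_iff_of_pos_left hc, sinSum_eq_zero_and_sum_mul_cos_pos_iff hM, sin_eq_zero_iff]
  refine exists_congr fun k => ?_
  have hrhs : (M - 1) * (2 * π * d / lam * (v - x)) / 2 = (M - 1) * d * (v - x) / lam * π := by
    field_simp
  rw [hrhs, mul_left_inj' pi_ne_zero, eq_div_iff hlam.ne', eq_comm (a := v),
    ← eq_sub_iff_add_eq', div_eq_iff (mul_pos hM1 hd).ne',
    mul_comm (v - x)]

/-- the set of stable points of the ODE drift `f(·,x)` on `(−1,1]`
equals `{x + kλ/((M−1)d) : k ∈ ℤ} ∩ (−1,1]`. -/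
theorem stmt_3 (M : ℕ) (hM : 2 ≤ M) (d lam : ℝ) (hd : 0 < d) (hdl : d ≤ lam / 2)
    (x : ℝ) (hx : x ∈ Set.Ioo (-1 : ℝ) 1) :
    {v : ℝ | v ∈ Set.Ioc (-1 : ℝ) 1 ∧ driftF M d lam v x = 0 ∧
        deriv (fun u => driftF M d lam u x) v < 0}
      = {v : ℝ | v ∈ Set.Ioc (-1 : ℝ) 1 ∧
          ∃ k : ℤ, v = x + (k : ℝ) * lam / (((M : ℝ) - 1) * d)} :=
  stmt_3_general M hM d lam hd hdl x
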